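/- arXiv:2105.03818 — 3 statements merged into one kernel-verified Lean document; each statement's English description precedes it below -/
import Mathlib

section
/- Let g : ℝ → ℝ be strictly convex and differentiable, and let D(a,y) = g(y) − g(a) − (deriv g a)·(y − a) be the associated Bregman loss. For each environment e ∈ E let μ_e be the joint law of (Φ, Ψ, Y) on A × B × ℝ, where A, B are standard Borel spaces. Assume: (i) invariance: the conditional distribution of Y given Φ is the same under all μ_e, and h* : A → ℝ is (a version of) the conditional expectation h*(φ) = E[Y | Φ = φ], common to all environments; (ii) heterogeneity: for every e ∈ E there exist e' ∈ E and a probability measure q on B such that under μ_{e'} the pair (Φ, Y) has the same joint law as under μ_e, and Ψ is independent of (Φ, Y) with law q; (iii) all the Bregman losses appearing below are integrable. Then for every measurable h : A × B → ℝ, sup over e ∈ E of E_{μ_e}[D(h*(Φ), Y)] ≤ sup over e ∈ E of E_{μ_e}[D(h(Φ,Ψ), Y)]; i.e., the predictor h*(X) = E[Y | Φ] (viewed as a function of X = (Φ,Ψ) depending only on Φ) minimizes the worst-case expected Bregman loss over the environments. -/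
open MeasureTheory ProbabilityTheory

/-- The Bregman loss associated with a differentiable function `g : ℝ → ℝ`:
`D(a, y) = g(y) - g(a) - g'(a) * (y - a)`. -/
noncomputable def bregmanLoss (g : ℝ → ℝ) (a y : ℝ) : ℝ :=
  g y - g a - deriv g a * (y - a)

lemma bregmanLoss_nonneg (g : ℝ → ℝ) (hg : ConvexOn ℝ Set.univ g)
    (hg_diff : Differentiable ℝ g) (a m : ℝ) : 0 ≤ bregmanLoss g a m := by
  rcases lt_trichotomy a m with hlt | heq | hgt
  · have hs := hg.deriv_le_slope (Set.mem_univ a) (Set.mem_univ m) hlt (hg_diff a)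
    rw [slope_def_field] at hs
    have hma : (0:ℝ) < m - a := by linarith
    have : deriv g a * (m - a) ≤ g m - g a := (le_div_iff₀ hma).mp hs
    unfold bregmanLoss; linarith
  · subst heq; unfold bregmanLoss; simp
  · have hs := hg.slope_le_deriv (Set.mem_univ m) (Set.mem_univ a) hgt (hg_diff a)
    rw [slope_def_field] at hs
    have ham : (0:ℝ) < a - m := by linarith
    have h1 : g a - g m ≤ deriv g a * (a - m) := by
      rw [div_le_iff₀ ham] at hs; linarith
    have h2 : deriv g a * (m - a) = -(deriv g a * (a - m)) := by ring
    unfold bregmanLoss; linarith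

lemma bregman_integral_le (g : ℝ → ℝ) (hg : StrictConvexOn ℝ Set.univ g)
    (hg_diff : Differentiable ℝ g) (κ : Measure ℝ) [IsProbabilityMeasure κ]
    {m a : ℝ} (hm : m = ∫ y, y ∂κ)
    (hint_m : Integrable (fun y => bregmanLoss g m y) κ)
    (hint_a : Integrable (fun y => bregmanLoss g a y) κ) :
    ∫ y, bregmanLoss g m y ∂κ ≤ ∫ y, bregmanLoss g a y ∂κ := by
  by_cases hd : deriv g a = deriv g m
  · have ham : a = m := by
      have hsm : StrictMonoOn (deriv g) Set.univ :=
        hg.strictMonoOn_deriv (fun x _ => (hg_diff x))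
      exact hsm.injOn (Set.mem_univ a) (Set.mem_univ m) hd
    rw [ham]
  · set c : ℝ := deriv g m - deriv g a with hc
    have hc0 : c ≠ 0 := sub_ne_zero.mpr fun hh => hd hh.symm
    set k : ℝ := g m - g a + deriv g a * a - deriv g m * m with hk
    have hfun : (fun y => bregmanLoss g a y - bregmanLoss g m y)
        = fun y => c * y + k := by
      funext y; simp only [bregmanLoss, hc, hk]; ring
    have hdiff_int : Integrable (fun y => c * y + k) κ := by
      rw [← hfun]; exact hint_a.sub hint_m
    have hcy_int : Integrable (fun y => c * y) κ := by
      have h' := hdiff_int.sub (integrable_const k)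
      refine h'.congr (Filter.Eventually.of_forall fun y => ?_)
      simp
    have hy_int : Integrable (fun y : ℝ => y) κ := by
      have := hcy_int.const_mul c⁻¹
      simpa [← mul_assoc, inv_mul_cancel₀ hc0] using this
    have key : ∫ y, bregmanLoss g a y ∂κ - ∫ y, bregmanLoss g m y ∂κ
        = bregmanLoss g a m := by
      rw [← integral_sub hint_a hint_m]
      calc ∫ y, (bregmanLoss g a y - bregmanLoss g m y) ∂κ
          = ∫ y, (c * y + k) ∂κ := by rw [hfun]
        _ = c * (∫ y, y ∂κ) + k := by
            rw [integral_add hcy_int (integrable_const k), integral_const_mul c (fun y => y),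
              integral_const]; simp
        _ = bregmanLoss g a m := by rw [← hm]; simp only [bregmanLoss, hc, hk]; ring
    have h0 := bregmanLoss_nonneg g hg.convexOn hg_diff a m
    linarith

lemma core_condKernel {A : Type*} [MeasurableSpace A]
    (g : ℝ → ℝ) (hg : StrictConvexOn ℝ Set.univ g) (hg_diff : Differentiable ℝ g)
    (ν : Measure (A × ℝ)) [IsFiniteMeasure ν]
    (hstar f : A → ℝ)
    (h_ce : ∀ᵐ φ ∂ν.fst, hstar φ = ∫ y, y ∂(ν.condKernel φ))
    (h1 : Integrable (fun p : A × ℝ => bregmanLoss g (hstar p.1) p.2) ν)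
    (h2 : Integrable (fun p : A × ℝ => bregmanLoss g (f p.1) p.2) ν) :
    ∫ p, bregmanLoss g (hstar p.1) p.2 ∂ν ≤ ∫ p, bregmanLoss g (f p.1) p.2 ∂ν := by
  rw [← Measure.integral_condKernel h1, ← Measure.integral_condKernel h2]
  refine integral_mono_ae ?_ ?_ ?_
  · exact h1.norm_integral_condKernel.mono' h1.1.integral_condKernel
      (Filter.Eventually.of_forall fun x => le_rfl)
  · exact h2.norm_integral_condKernel.mono' h2.1.integral_condKernel
      (Filter.Eventually.of_forall fun x => le_rfl)
  · filter_upwards [h_ce, h1.condKernel_ae, h2.condKernel_ae] with φ hce hi1 hi2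
    exact bregman_integral_le g hg hg_diff _ hce hi1 hi2


/-- Minimax optimality of the invariant predictor `h* = E[Y | Φ]` for Bregman losses.
Environments `e : E` are probability measures `μ e` on `A × B × ℝ` giving the joint law of
`(Φ, Ψ, Y)`, where `Φ` is the invariant component. Assuming (i) the conditional distribution of
`Y` given `Φ` is the same in all environments and `hstar` is a common version of the conditional
mean `E[Y | Φ = φ]`, (ii) heterogeneity: for every environment there is another environment with
the same joint law of `(Φ, Y)` in which `Ψ` is independent of `(Φ, Y)` with some law `q`, and
(iii) integrability of the Bregman losses, the predictor `hstar ∘ Φ` minimizes the worst-case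
expected Bregman loss over environments among all measurable predictors `h (Φ, Ψ)`. -/
theorem invariant_predictor_minimax {E A B : Type*}
    [MeasurableSpace A] [StandardBorelSpace A] [Nonempty A]
    [MeasurableSpace B] [StandardBorelSpace B] [Nonempty B]
    (g : ℝ → ℝ) (hg_convex : StrictConvexOn ℝ Set.univ g) (hg_diff : Differentiable ℝ g)
    (μ : E → Measure (A × B × ℝ)) [∀ e, IsProbabilityMeasure (μ e)]
    (hstar : A → ℝ) (hstar_meas : Measurable hstar)
    -- (i) invariance of the conditional distribution of Y given Φ across environments
    (h_inv : ∀ e e' : E, ∀ᵐ φ ∂((μ e).map Prod.fst),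
      condDistrib (fun ω => ω.2.2) Prod.fst (μ e) φ
        = condDistrib (fun ω => ω.2.2) Prod.fst (μ e') φ)
    -- hstar is a (common) version of the conditional expectation E[Y | Φ = φ]
    (h_ce : ∀ e : E, ∀ᵐ φ ∂((μ e).map Prod.fst),
      hstar φ = ∫ y, y ∂(condDistrib (fun ω : A × B × ℝ => ω.2.2) Prod.fst (μ e) φ))
    -- (ii) heterogeneity: product environments exist
    (h_het : ∀ e : E, ∃ (e' : E) (q : Measure B), IsProbabilityMeasure q ∧
      μ e' = Measure.map (fun p : (A × ℝ) × B => (p.1.1, p.2, p.1.2))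
        (((μ e).map (fun ω : A × B × ℝ => (ω.1, ω.2.2))).prod q))
    -- candidate predictor and (iii) integrability of the losses
    (h : A × B → ℝ) (h_meas : Measurable h)
    (h_int : ∀ e : E, Integrable (fun ω : A × B × ℝ => bregmanLoss g (h (ω.1, ω.2.1)) ω.2.2) (μ e))
    (hstar_int : ∀ e : E, Integrable (fun ω : A × B × ℝ => bregmanLoss g (hstar ω.1) ω.2.2) (μ e)) :
    ⨆ e : E, ((∫ ω, bregmanLoss g (hstar ω.1) ω.2.2 ∂(μ e) : ℝ) : EReal)
      ≤ ⨆ e : E, ((∫ ω, bregmanLoss g (h (ω.1, ω.2.1)) ω.2.2 ∂(μ e) : ℝ) : EReal) := by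
  refine iSup_le fun e => ?_
  obtain ⟨e', q, hq, hμ'⟩ := h_het e
  haveI := hq
  have hπm : Measurable (fun ω : A × B × ℝ => (ω.1, ω.2.2)) :=
    measurable_fst.prodMk measurable_snd.snd
  set ν : Measure (A × ℝ) := (μ e).map (fun ω : A × B × ℝ => (ω.1, ω.2.2)) with hν
  haveI : IsProbabilityMeasure ν := Measure.isProbabilityMeasure_map hπm.aemeasurable
  have hTm : Measurable (fun p : (A × ℝ) × B => (p.1.1, p.2, p.1.2)) :=
    measurable_fst.fst.prodMk (measurable_snd.prodMk measurable_fst.snd)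
  -- measurability of the Bregman loss
  have hBL : Measurable (fun p : ℝ × ℝ => bregmanLoss g p.1 p.2) := by
    unfold bregmanLoss
    exact ((hg_diff.continuous.measurable.comp measurable_snd).sub
      (hg_diff.continuous.measurable.comp measurable_fst)).sub
      (((measurable_deriv g).comp measurable_fst).mul (measurable_snd.sub measurable_fst))
  have hLs : Measurable (fun p : A × ℝ => bregmanLoss g (hstar p.1) p.2) :=
    hBL.comp ((hstar_meas.comp measurable_fst).prodMk measurable_snd)
  have hLs' : Measurable (fun ω : A × B × ℝ => bregmanLoss g (hstar ω.1) ω.2.2) :=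
    hBL.comp ((hstar_meas.comp measurable_fst).prodMk measurable_snd.snd)
  have hLh : Measurable (fun p : (A × ℝ) × B => bregmanLoss g (h (p.1.1, p.2)) p.1.2) :=
    hBL.comp ((h_meas.comp (measurable_fst.fst.prodMk measurable_snd)).prodMk
      measurable_fst.snd)
  have hLh' : Measurable (fun ω : A × B × ℝ => bregmanLoss g (h (ω.1, ω.2.1)) ω.2.2) :=
    hBL.comp ((h_meas.comp (measurable_fst.prodMk measurable_snd.fst)).prodMk
      measurable_snd.snd)
  -- integrability over ν
  have hsint_ν : Integrable (fun p : A × ℝ => bregmanLoss g (hstar p.1) p.2) ν := by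
    rw [hν, integrable_map_measure hLs.aestronglyMeasurable hπm.aemeasurable]
    exact hstar_int e
  -- E1
  have E1 : ∫ ω, bregmanLoss g (hstar ω.1) ω.2.2 ∂(μ e)
      = ∫ p, bregmanLoss g (hstar p.1) p.2 ∂ν := by
    rw [hν, integral_map hπm.aemeasurable hLs.aestronglyMeasurable]
  -- the first marginal of ν.prod q is ν
  have hfstprod : (ν.prod q).map Prod.fst = ν := by
    rw [Measure.map_fst_prod]; simp
  -- ν.fst is the law of Φ
  have hfst : ν.fst = (μ e).map Prod.fst := by
    rw [Measure.fst, hν, Measure.map_map measurable_fst hπm]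
    rfl
  -- condDistrib is the condKernel of ν
  have hcd : condDistrib (fun ω : A × B × ℝ => ω.2.2) Prod.fst (μ e) = ν.condKernel := by
    rw [condDistrib]
  have h_ce' : ∀ᵐ φ ∂ν.fst, hstar φ = ∫ y, y ∂(ν.condKernel φ) := by
    rw [hfst]
    filter_upwards [h_ce e] with φ hφ
    rwa [hcd] at hφ
  -- integrability of the candidate loss over ν.prod q
  have hFull : Integrable (fun p : (A × ℝ) × B => bregmanLoss g (h (p.1.1, p.2)) p.1.2)
      (ν.prod q) := by
    have := h_int e'
    rw [hμ', integrable_map_measure hLh'.aestronglyMeasurable hTm.aemeasurable] at this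
    exact this
  -- pointwise comparison for q-a.e. ψ
  have hae : ∀ᵐ ψ ∂q, ∫ p, bregmanLoss g (hstar p.1) p.2 ∂ν
      ≤ ∫ x : A × ℝ, bregmanLoss g (h (x.1, ψ)) x.2 ∂ν := by
    filter_upwards [hFull.prod_left_ae] with ψ hψ
    exact core_condKernel g hg_convex hg_diff ν hstar (fun φ => h (φ, ψ)) h_ce' hsint_ν hψ
  -- main real inequality
  have main : ∫ ω, bregmanLoss g (hstar ω.1) ω.2.2 ∂(μ e)
      ≤ ∫ ω, bregmanLoss g (h (ω.1, ω.2.1)) ω.2.2 ∂(μ e') := by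
    calc ∫ ω, bregmanLoss g (hstar ω.1) ω.2.2 ∂(μ e)
        = ∫ p, bregmanLoss g (hstar p.1) p.2 ∂ν := E1
      _ = ∫ _ψ, (∫ p, bregmanLoss g (hstar p.1) p.2 ∂ν) ∂q := by simp
      _ ≤ ∫ ψ, ∫ x : A × ℝ, bregmanLoss g (h (x.1, ψ)) x.2 ∂ν ∂q := by
          refine integral_mono_ae (integrable_const _) ?_ hae
          exact hFull.integral_prod_right
      _ = ∫ p : (A × ℝ) × B, bregmanLoss g (h (p.1.1, p.2)) p.1.2 ∂(ν.prod q) :=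
          (integral_prod_symm _ hFull).symm
      _ = ∫ ω, bregmanLoss g (h (ω.1, ω.2.1)) ω.2.2 ∂(μ e') := by
          rw [hμ', integral_map hTm.aemeasurable hLh'.aestronglyMeasurable]
  refine le_trans ?_ (le_iSup
    (fun e : E => ((∫ ω, bregmanLoss g (h (ω.1, ω.2.1)) ω.2.2 ∂(μ e) : ℝ) : EReal)) e')
  exact_mod_cast main
end

section
/- Let g : ℝ → ℝ be convex and differentiable, and let D(a,y) = g(y) − g(a) − (deriv g a)·(y − a). Let Y be a real-valued integrable random variable on a probability space such that g(Y) is integrable. Then for every a ∈ ℝ, E[D(a, Y)] ≥ E[D(E[Y], Y)]; that is, the mean E[Y] minimizes the expected Bregman loss a ↦ E[D(a,Y)]. -/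
open MeasureTheory ProbabilityTheory

/-- Tangent line inequality for convex differentiable functions. -/
lemma tangent_le {g : ℝ → ℝ} (hg_convex : ConvexOn ℝ Set.univ g)
    (hg_diff : Differentiable ℝ g) (a m : ℝ) :
    g a + deriv g a * (m - a) ≤ g m := by
  rcases lt_trichotomy a m with h | rfl | h
  · have := hg_convex.deriv_le_slope (Set.mem_univ a) (Set.mem_univ m) h (hg_diff a)
    rw [slope_def_field, le_div_iff₀ (by linarith : (0:ℝ) < m - a)] at this
    nlinarith
  · simp
  · have := hg_convex.slope_le_deriv (Set.mem_univ m) (Set.mem_univ a) h (hg_diff a)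
    rw [slope_def_field, div_le_iff₀ (by linarith : (0:ℝ) < a - m)] at this
    nlinarith

/-- The mean `E[Y]` minimizes the expected Bregman loss `a ↦ E[D(a, Y)]`: for a convex
differentiable `g : ℝ → ℝ`, an integrable real random variable `Y` with `g ∘ Y` integrable,
and any `a : ℝ`, we have `E[D(E[Y], Y)] ≤ E[D(a, Y)]`. -/
theorem mean_minimizes_bregmanLoss {Ω : Type*} [MeasurableSpace Ω]
    (μ : Measure Ω) [IsProbabilityMeasure μ]
    (g : ℝ → ℝ) (hg_convex : ConvexOn ℝ Set.univ g) (hg_diff : Differentiable ℝ g)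
    (Y : Ω → ℝ) (hY_int : Integrable Y μ) (hgY_int : Integrable (fun ω => g (Y ω)) μ)
    (a : ℝ) :
    ∫ ω, bregmanLoss g (∫ ω', Y ω' ∂μ) (Y ω) ∂μ ≤ ∫ ω, bregmanLoss g a (Y ω) ∂μ := by
  set m := ∫ ω', Y ω' ∂μ with hm
  have key : ∀ b : ℝ, ∫ ω, bregmanLoss g b (Y ω) ∂μ
      = (∫ ω, g (Y ω) ∂μ) - g b - deriv g b * (m - b) := by
    intro b
    unfold bregmanLoss
    have h1 : Integrable (fun ω => g (Y ω) - g b) μ := hgY_int.sub (integrable_const _)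
    have h2 : Integrable (fun ω => deriv g b * (Y ω - b)) μ :=
      (hY_int.sub (integrable_const _)).const_mul _
    rw [show (fun ω => g (Y ω) - g b - deriv g b * (Y ω - b))
        = fun ω => (g (Y ω) - g b) - deriv g b * (Y ω - b) from rfl,
      integral_sub h1 h2, integral_sub hgY_int (integrable_const _), integral_const_mul,
      integral_sub hY_int (integrable_const _), integral_const, integral_const]
    simp [hm]
  rw [key, key]
  have := tangent_le hg_convex hg_diff a m
  simp only [sub_self, mul_zero, sub_zero]
  linarith
end

section
/- Let g : ℝ → ℝ be convex and differentiable, and let D(a,y) = g(y) − g(a) − (deriv g a)·(y − a). Let (X, Y) be random variables on a probability space with X taking values in a standard Borel space 𝒳 and Y real-valued and integrable, with g(Y) integrable, and let h*(X) = E[Y | X] be (a version of) the conditional expectation of Y given X. Then for every measurable h : 𝒳 → ℝ such that D(h(X), Y) is integrable, E[D(h(X), Y)] ≥ E[D(h*(X), Y)]; that is, the conditional expectation minimizes the expected Bregman loss among all measurable predictors. -/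
/-!
Write `b = E[Y | X]`. For any `σ(X)`-measurable predictor `a`, the Bregman loss satisfies the
three-point identity `D(a, Y) - D(b, Y) = D(a, b) + (g'(b) - g'(a)) (Y - b)`. The first term is
nonnegative by convexity, and the second has vanishing expectation because `g'(b) - g'(a)` is
`σ(X)`-measurable while `E[Y - b | X] = 0`. That second term need not be integrable, so the
orthogonality is applied on the `σ(X)`-measurable sets `{|g'(b) - g'(a)| ≤ n}` and one passes to
the limit `n → ∞`.
-/

open MeasureTheory ProbabilityTheory

theorem bregmanLoss_nonneg_s4 {g : ℝ → ℝ} {S : Set ℝ} (hg : ConvexOn ℝ S g) {a y : ℝ}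
    (ha : a ∈ S) (hy : y ∈ S) (hga : DifferentiableAt ℝ g a) : 0 ≤ bregmanLoss g a y := by
  unfold bregmanLoss
  rcases lt_trichotomy a y with hlt | rfl | hgt
  · have hslope := hg.deriv_le_slope ha hy hlt hga
    rw [slope_def_field, le_div_iff₀ (sub_pos.2 hlt)] at hslope
    linarith
  · simp
  · have hslope := hg.slope_le_deriv hy ha hgt hga
    rw [slope_def_field, div_le_iff₀ (sub_pos.2 hgt)] at hslope
    linarith

theorem bregmanLoss_sub_bregmanLoss (g : ℝ → ℝ) (a b y : ℝ) :
    bregmanLoss g a y - bregmanLoss g b y =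
      bregmanLoss g a b + (deriv g b - deriv g a) * (y - b) := by
  unfold bregmanLoss
  ring

section CondExp

variable {Ω : Type*} {m m₀ : MeasurableSpace Ω} {μ : Measure Ω}

theorem condExp_sub_condExp_ae_eq_zero (hm : m ≤ m₀) [SigmaFinite (μ.trim hm)] {Y : Ω → ℝ}
    (hY : Integrable Y μ) : μ[Y - μ[Y | m] | m] =ᵐ[μ] 0 := by
  filter_upwards [condExp_sub hY integrable_condExp m] with ω hω
  rw [hω, Pi.sub_apply,
    condExp_of_stronglyMeasurable hm stronglyMeasurable_condExp integrable_condExp, sub_self,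
    Pi.zero_apply]

theorem integral_mul_eq_zero_of_condExp_ae_eq_zero (hm : m ≤ m₀) [IsFiniteMeasure μ]
    {C V : Ω → ℝ} (hC : StronglyMeasurable[m] C) {R : ℝ} (hCR : ∀ᵐ ω ∂μ, ‖C ω‖ ≤ R)
    (hV : Integrable V μ) (hV₀ : μ[V | m] =ᵐ[μ] 0) : ∫ ω, C ω * V ω ∂μ = 0 :=
  calc ∫ ω, C ω * V ω ∂μ = ∫ ω, μ[C * V | m] ω ∂μ := (integral_condExp hm).symm
    _ = ∫ ω, C ω * μ[V | m] ω ∂μ :=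
        integral_congr_ae (condExp_stronglyMeasurable_mul_of_bound hm hC hV R hCR)
    _ = 0 := integral_eq_zero_of_ae <| by filter_upwards [hV₀] with ω hω; simp [hω]

theorem integral_add_mul_nonneg_of_condExp_ae_eq_zero (hm : m ≤ m₀) [IsFiniteMeasure μ]
    {W C V : Ω → ℝ} (hW : 0 ≤ W) (hC : Measurable[m] C) (hV : Integrable V μ)
    (hV₀ : μ[V | m] =ᵐ[μ] 0) (hint : Integrable (fun ω => W ω + C ω * V ω) μ) :
    0 ≤ ∫ ω, W ω + C ω * V ω ∂μ := by
  set A : ℕ → Set Ω := fun n => {ω | |C ω| ≤ n}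
  have hA : ∀ n, MeasurableSet[m] (A n) := fun n => measurable_abs.comp hC measurableSet_Iic
  have hA_mono : Monotone A := fun i j hij ω (hω : |C ω| ≤ i) =>
    hω.trans (Nat.cast_le.2 hij)
  have hA_univ : ⋃ n, A n = Set.univ :=
    Set.iUnion_eq_univ_iff.2 fun ω => exists_nat_ge |C ω|
  have hCA_bound : ∀ n ω, ‖(A n).indicator C ω‖ ≤ n := fun n ω => by
    by_cases hω : ω ∈ A n
    · rw [Set.indicator_of_mem hω, Real.norm_eq_abs]
      exact hω
    · rw [Set.indicator_of_notMem hω, norm_zero]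
      positivity
  have hsetIntegral : ∀ n, 0 ≤ ∫ ω in A n, W ω + C ω * V ω ∂μ := fun n => by
    rw [← integral_indicator (hm _ (hA n))]
    calc 0 = ∫ ω, (A n).indicator C ω * V ω ∂μ :=
          (integral_mul_eq_zero_of_condExp_ae_eq_zero hm
            (hC.indicator (hA n)).stronglyMeasurable (.of_forall (hCA_bound n)) hV hV₀).symm
      _ ≤ ∫ ω, (A n).indicator (fun ω => W ω + C ω * V ω) ω ∂μ := by
          refine integral_mono
            (hV.bdd_mul ((hC.indicator (hA n)).mono hm le_rfl).aestronglyMeasurable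
              (.of_forall (hCA_bound n)))
            (hint.indicator (hm _ (hA n))) fun ω => ?_
          by_cases hω : ω ∈ A n
          · simpa [hω] using hW ω
          · simp [hω]
  have htendsto := tendsto_setIntegral_of_monotone (fun n => hm _ (hA n)) hA_mono
    (by rw [hA_univ]; exact hint.integrableOn)
  rw [hA_univ, Measure.restrict_univ] at htendsto
  exact ge_of_tendsto' htendsto hsetIntegral

theorem integral_bregmanLoss_condExp_le (hm : m ≤ m₀) [IsFiniteMeasure μ] {g : ℝ → ℝ}
    (hg_convex : ConvexOn ℝ Set.univ g) (hg_diff : Differentiable ℝ g) {Y a : Ω → ℝ}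
    (hY : Integrable Y μ) (ha : Measurable[m] a)
    (ha_int : Integrable (fun ω => bregmanLoss g (a ω) (Y ω)) μ) :
    ∫ ω, bregmanLoss g (μ[Y | m] ω) (Y ω) ∂μ ≤ ∫ ω, bregmanLoss g (a ω) (Y ω) ∂μ := by
  have hD_nonneg : ∀ a y, 0 ≤ bregmanLoss g a y := fun a y =>
    bregmanLoss_nonneg_s4 hg_convex (Set.mem_univ a) (Set.mem_univ y) (hg_diff a)
  by_cases hb_int : Integrable (fun ω => bregmanLoss g (μ[Y | m] ω) (Y ω)) μ
  swap
  · rw [integral_undef hb_int]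
    exact integral_nonneg fun ω => hD_nonneg _ _
  rw [← sub_nonneg, ← integral_sub ha_int hb_int]
  simp_rw [bregmanLoss_sub_bregmanLoss]
  refine integral_add_mul_nonneg_of_condExp_ae_eq_zero hm (fun ω => hD_nonneg _ _)
    ((measurable_deriv g).comp stronglyMeasurable_condExp.measurable
      |>.sub ((measurable_deriv g).comp ha))
    (hY.sub integrable_condExp) (condExp_sub_condExp_ae_eq_zero hm hY) ?_
  exact (ha_int.sub hb_int).congr (.of_forall fun ω => bregmanLoss_sub_bregmanLoss g _ _ _)

end CondExp

theorem condexp_minimizes_bregmanLoss_general {Ω 𝒳 : Type*} [MeasurableSpace Ω]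
    [MeasurableSpace 𝒳]
    (μ : Measure Ω) [IsProbabilityMeasure μ]
    (g : ℝ → ℝ) (hg_convex : ConvexOn ℝ Set.univ g) (hg_diff : Differentiable ℝ g)
    (X : Ω → 𝒳) (hX : Measurable X)
    (Y : Ω → ℝ) (hY_int : Integrable Y μ)
    (hstar : 𝒳 → ℝ)
    (hstar_ce : (fun ω => hstar (X ω)) =ᵐ[μ] μ[Y | MeasurableSpace.comap X inferInstance])
    (h : 𝒳 → ℝ) (h_meas : Measurable h)
    (h_int : Integrable (fun ω => bregmanLoss g (h (X ω)) (Y ω)) μ) :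
    ∫ ω, bregmanLoss g (hstar (X ω)) (Y ω) ∂μ ≤ ∫ ω, bregmanLoss g (h (X ω)) (Y ω) ∂μ := by
  have hstar_integral : ∫ ω, bregmanLoss g (hstar (X ω)) (Y ω) ∂μ =
      ∫ ω, bregmanLoss g (μ[Y | MeasurableSpace.comap X inferInstance] ω) (Y ω) ∂μ :=
    integral_congr_ae <| by filter_upwards [hstar_ce] with ω hω; rw [hω]
  rw [hstar_integral]
  exact integral_bregmanLoss_condExp_le hX.comap_le hg_convex hg_diff hY_int
    (h_meas.comp (comap_measurable X)) h_int

/-- The conditional expectation minimizes the expected Bregman loss among all measurable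
predictors: if `hstar` is a version of the conditional expectation `E[Y | X]` (i.e.
`hstar ∘ X` is a.e. equal to the conditional expectation of `Y` with respect to the σ-algebra
generated by `X`), then for every measurable `h : 𝒳 → ℝ` with `D(h(X), Y)` integrable,
`E[D(hstar(X), Y)] ≤ E[D(h(X), Y)]`. -/
theorem condexp_minimizes_bregmanLoss {Ω 𝒳 : Type*} [MeasurableSpace Ω]
    [MeasurableSpace 𝒳] [StandardBorelSpace 𝒳]
    (μ : Measure Ω) [IsProbabilityMeasure μ]
    (g : ℝ → ℝ) (hg_convex : ConvexOn ℝ Set.univ g) (hg_diff : Differentiable ℝ g)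
    (X : Ω → 𝒳) (hX : Measurable X)
    (Y : Ω → ℝ) (hY : Measurable Y) (hY_int : Integrable Y μ)
    (hgY_int : Integrable (fun ω => g (Y ω)) μ)
    (hstar : 𝒳 → ℝ) (hstar_meas : Measurable hstar)
    (hstar_ce : (fun ω => hstar (X ω)) =ᵐ[μ] μ[Y | MeasurableSpace.comap X inferInstance])
    (h : 𝒳 → ℝ) (h_meas : Measurable h)
    (h_int : Integrable (fun ω => bregmanLoss g (h (X ω)) (Y ω)) μ) :
    ∫ ω, bregmanLoss g (hstar (X ω)) (Y ω) ∂μ ≤ ∫ ω, bregmanLoss g (h (X ω)) (Y ω) ∂μ :=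
  condexp_minimizes_bregmanLoss_general μ g hg_convex hg_diff X hX Y hY_int hstar hstar_ce h h_meas
    h_int
end
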